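/- Let m ≥ 2 be an even integer. The polynomial f(x) = x^{m+1} − 2x^m + 2x − 2 has exactly one real root, and this root lies in the open interval (1, 2). -/

import Mathlib

/-!
Write `f(x) = x^m (x - 2) + 2 (x - 1)`. Since `x^m ≥ 0` for even `m`, `f < 0` on `(-∞, 1]` and
`f > 0` on `[2, ∞)`, so every real root lies in `(1, 2)`, and one exists by the intermediate value
theorem. For uniqueness, `g(x) = f(x) / x^m` has the same roots on `[1, ∞)` and
`g'(x) = (x^(m+1) - 2(m-1)x + 2m) / x^(m+1)`; the numerator is positive for `x ≥ 1` by the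
second-order Bernoulli inequality `(1+u)^n ≥ 1 + nu + C(n,2)u²`, so `g` is strictly increasing.
-/

open Set

theorem one_add_mul_add_choose_two_mul_sq_le_pow {R : Type*} [CommSemiring R] [PartialOrder R]
    [IsOrderedRing R] {u : R} (hu : 0 ≤ u) (n : ℕ) :
    1 + n * u + n.choose 2 * u ^ 2 ≤ (1 + u) ^ n := by
  induction n with
  | zero => simp
  | succ n ih =>
    calc 1 + (n + 1 : ℕ) * u + (n + 1).choose 2 * u ^ 2
        ≤ 1 + (n + 1 : ℕ) * u + (n + 1).choose 2 * u ^ 2 + n.choose 2 * u ^ 3 :=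
          le_add_of_nonneg_right (by positivity)
      _ = (1 + n * u + n.choose 2 * u ^ 2) * (1 + u) := by
          simp only [Nat.choose_succ_succ', Nat.choose_one_right]
          push_cast; ring
      _ ≤ (1 + u) ^ (n + 1) := by
          rw [pow_succ (1 + u)]; exact mul_le_mul_of_nonneg_right ih (add_nonneg zero_le_one hu)

def f (m : ℕ) (x : ℝ) : ℝ := x ^ (m + 1) - 2 * x ^ m + 2 * x - 2

theorem f_eq_pow_mul_add (m : ℕ) (x : ℝ) : f m x = x ^ m * (x - 2) + 2 * (x - 1) := by
  unfold f; ring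

theorem continuous_f (m : ℕ) : Continuous (f m) := by unfold f; fun_prop

theorem f_neg_of_le_one {m : ℕ} (hm : Even m) {x : ℝ} (hx : x ≤ 1) : f m x < 0 := by
  rw [f_eq_pow_mul_add]
  rcases hx.lt_or_eq with hx | rfl
  · nlinarith [hm.pow_nonneg x]
  · norm_num

theorem f_pos_of_two_le {m : ℕ} (hm : Even m) {x : ℝ} (hx : 2 ≤ x) : 0 < f m x := by
  rw [f_eq_pow_mul_add]
  nlinarith [hm.pow_nonneg x]

theorem hasDerivAt_f_div_pow (m : ℕ) {x : ℝ} (hx : x ≠ 0) :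
    HasDerivAt (fun y => f m y / y ^ m)
      ((x ^ (m + 1) - 2 * (m - 1) * x + 2 * m) / x ^ (m + 1)) x := by
  have hf : HasDerivAt (f m) ((m + 1 : ℕ) * x ^ m - 2 * (m * x ^ (m - 1)) + 2 * 1) x :=
    (((hasDerivAt_pow (m + 1) x).sub ((hasDerivAt_pow m x).const_mul 2)).add
      ((hasDerivAt_id x).const_mul 2)).sub_const 2
  refine (hf.div (hasDerivAt_pow m x) (pow_ne_zero m hx)).congr_deriv ?_
  cases m with
  | zero => simp [f]; field_simp
  | succ k =>
    simp only [f, add_tsub_cancel_right]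
    field_simp
    push_cast
    ring

theorem pow_succ_sub_add_pos (m : ℕ) {x : ℝ} (hx : 1 ≤ x) :
    0 < x ^ (m + 1) - 2 * (m - 1) * x + 2 * m := by
  obtain ⟨u, hu, rfl⟩ : ∃ u, 0 ≤ u ∧ x = 1 + u := ⟨x - 1, by linarith, by ring⟩
  have h := one_add_mul_add_choose_two_mul_sq_le_pow hu (m + 1)
  rw [Nat.cast_choose_two] at h
  push_cast at h
  nlinarith [sq_nonneg (m * u - 1), mul_nonneg (m.cast_nonneg : (0:ℝ) ≤ m) (sq_nonneg u)]

theorem strictMonoOn_f_div_pow (m : ℕ) : StrictMonoOn (fun x => f m x / x ^ m) (Ici 1) := by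
  refine strictMonoOn_of_deriv_pos (convex_Ici 1) ?_ fun x hx => ?_
  · exact fun x hx =>
      (hasDerivAt_f_div_pow m (by linarith [mem_Ici.1 hx])).continuousAt.continuousWithinAt
  · rw [interior_Ici, mem_Ioi] at hx
    rw [(hasDerivAt_f_div_pow m (by positivity)).deriv]
    exact div_pos (pow_succ_sub_add_pos m hx.le) (by positivity)

theorem stmt_7 (m : ℕ) (hme : Even m) :
    (∃! x : ℝ, x ^ (m + 1) - 2 * x ^ m + 2 * x - 2 = 0) ∧
    (∀ x : ℝ, x ^ (m + 1) - 2 * x ^ m + 2 * x - 2 = 0 → x ∈ Set.Ioo (1 : ℝ) 2) := by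
  change (∃! x, f m x = 0) ∧ ∀ x, f m x = 0 → x ∈ Ioo 1 2
  have hroots : ∀ x, f m x = 0 → x ∈ Ioo 1 2 := fun x hx =>
    ⟨lt_of_not_ge fun h => (f_neg_of_le_one hme h).ne hx,
      lt_of_not_ge fun h => (f_pos_of_two_le hme h).ne' hx⟩
  obtain ⟨c, -, hc⟩ := intermediate_value_Ioo one_le_two (continuous_f m).continuousOn
    ⟨f_neg_of_le_one hme le_rfl, f_pos_of_two_le hme le_rfl⟩
  refine ⟨⟨c, hc, fun y hy => (strictMonoOn_f_div_pow m).injOn ?_ ?_ ?_⟩, hroots⟩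
  · exact (hroots y hy).1.le
  · exact (hroots c hc).1.le
  · simp only [hy, hc, zero_div]
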